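/- Monotonicity of the implementable price set in the search cost (uniform case): if 0 < A₁ ≤ A₂ < 1 then P_{A₂} ⊆ P_{A₁}; equivalently, writing the search cost as s = (1−A)²/2, a lower search cost yields a smaller set of implementable prices. -/
import Mathlib


/-- Demand of seller 1 when ranked second (uniform match utilities). -/
noncomputable def D12 (A p1 p2 : ℝ) : ℝ := -A^2/2 + p1^2/2 - p1*p2 + A - p1 + p2

/-- Demand of seller 2 when ranked second (uniform match utilities). -/
noncomputable def D22 (A p1 p2 : ℝ) : ℝ := -A^2/2 + p2^2/2 - p1*p2 + A + p1 - p2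

/-- The bonus from being ranked first instead of second (uniform case). -/
noncomputable def bonus (A p1 p2 : ℝ) : ℝ := (1-A)^2 - (1/2)*(p1-p2)^2

/-- Seller 1's optimal deviation value when ranked second. -/
noncomputable def M1 (A p2 : ℝ) : ℝ :=
  sSup ((fun p' => p' * D12 A p' p2) '' Set.Icc (0:ℝ) 1)

/-- Seller 2's optimal deviation value when ranked second. -/
noncomputable def M2 (A p1 : ℝ) : ℝ :=
  sSup ((fun p' => p' * D22 A p1 p') '' Set.Icc (0:ℝ) 1)

/-- The function whose nonpositivity characterizes implementable prices. -/
noncomputable def H (A p1 p2 : ℝ) : ℝ := M1 A p2 / p1 + M2 A p1 / p2 + p1*p2 - 1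

/-- The set of implementable prices. -/
def implementableP (A : ℝ) : Set (ℝ × ℝ) :=
  {q | 0 < q.1 ∧ q.1 ≤ 1 ∧ 0 < q.2 ∧ q.2 ≤ 1 ∧ H A q.1 q.2 ≤ 0}

/-- The set of implementable search orders at prices `(p1, p2)`. -/
def phi (A p1 p2 : ℝ) : Set ℝ :=
  {α | α ∈ Set.Icc (0:ℝ) 1
    ∧ M1 A p2 ≤ p1 * D12 A p1 p2 + α * p1 * bonus A p1 p2
    ∧ M2 A p1 ≤ p2 * D22 A p1 p2 + (1-α) * p2 * bonus A p1 p2}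


lemma M1_mono (A₁ A₂ p2 : ℝ) (h12 : A₁ ≤ A₂) (hsum : A₁ + A₂ ≤ 2) :
    M1 A₁ p2 ≤ M1 A₂ p2 := by
  have hne : ((fun p' => p' * D12 A₂ p' p2) '' Set.Icc (0:ℝ) 1).Nonempty :=
    Set.Nonempty.image _ (Set.nonempty_Icc.2 zero_le_one)
  have hbdd : BddAbove ((fun p' => p' * D12 A₂ p' p2) '' Set.Icc (0:ℝ) 1) := by
    apply IsCompact.bddAbove_image isCompact_Icc
    apply Continuous.continuousOn
    unfold D12
    continuity
  apply csSup_le (Set.Nonempty.image _ (Set.nonempty_Icc.2 zero_le_one))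
  rintro x ⟨p', hp', rfl⟩
  have key : p' * D12 A₁ p' p2 ≤ p' * D12 A₂ p' p2 := by
    apply mul_le_mul_of_nonneg_left _ hp'.1
    unfold D12
    nlinarith [hp'.1, hp'.2]
  exact key.trans (le_csSup hbdd ⟨p', hp', rfl⟩)

lemma M2_mono (A₁ A₂ p1 : ℝ) (h12 : A₁ ≤ A₂) (hsum : A₁ + A₂ ≤ 2) :
    M2 A₁ p1 ≤ M2 A₂ p1 := by
  have hbdd : BddAbove ((fun p' => p' * D22 A₂ p1 p') '' Set.Icc (0:ℝ) 1) := by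
    apply IsCompact.bddAbove_image isCompact_Icc
    apply Continuous.continuousOn
    unfold D22
    continuity
  apply csSup_le (Set.Nonempty.image _ (Set.nonempty_Icc.2 zero_le_one))
  rintro x ⟨p', hp', rfl⟩
  have key : p' * D22 A₁ p1 p' ≤ p' * D22 A₂ p1 p' := by
    apply mul_le_mul_of_nonneg_left _ hp'.1
    unfold D22
    nlinarith [hp'.1, hp'.2]
  exact key.trans (le_csSup hbdd ⟨p', hp', rfl⟩)

/-- Monotonicity of the implementable price set in the search cost (uniform
case): a higher reservation value (lower search cost) yields a smaller set of
implementable prices: if `0 < A₁ ≤ A₂ < 1` then `P_{A₂} ⊆ P_{A₁}`. -/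
theorem implementableP_anti
    (A₁ A₂ : ℝ) (hA₁ : 0 < A₁) (hA₁₂ : A₁ ≤ A₂) (hA₂ : A₂ < 1) :
    implementableP A₂ ⊆ implementableP A₁ := by
  rintro ⟨p1, p2⟩ ⟨h1, h2, h3, h4, h5⟩
  refine ⟨h1, h2, h3, h4, ?_⟩
  have hsum : A₁ + A₂ ≤ 2 := by linarith
  have m1 := M1_mono A₁ A₂ p2 hA₁₂ hsum
  have m2 := M2_mono A₁ A₂ p1 hA₁₂ hsum
  have d1 : M1 A₁ p2 / p1 ≤ M1 A₂ p2 / p1 := by gcongr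
  have d2 : M2 A₁ p1 / p2 ≤ M2 A₂ p1 / p2 := by gcongr
  unfold H at h5 ⊢
  linarith
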